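/- With the sphere distance d(ζ,η)² = 2|1 - ζ·conj(η)| on S^{2N+1} and the Korányi distance on H^N, for all w = (z,t), w' = (z',t') in H^N: d(C(w), C(w')) = d(w,w') · (4/((1+|z|²)²+t²))^{1/4} · (4/((1+|z'|²)²+t'²))^{1/4}, where C is the Cayley transform. -/

import Mathlib

open Complex
open scoped ComplexConjugate

/-- The Cayley transform from the Heisenberg group `ℂ^N × ℝ` to `ℂ^N × ℂ ≅ ℂ^{N+1}`. -/
noncomputable def cayley {N : ℕ} (w : EuclideanSpace ℂ (Fin N) × ℝ) :
    EuclideanSpace ℂ (Fin N) × ℂ :=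
  (WithLp.toLp 2 (fun i => 2 * w.1 i / (((1 : ℝ) + ‖w.1‖ ^ 2 : ℝ) + w.2 * I)),
    (((1 : ℝ) - ‖w.1‖ ^ 2 : ℝ) - w.2 * I) / (((1 : ℝ) + ‖w.1‖ ^ 2 : ℝ) + w.2 * I))

/-- The Korányi distance on the Heisenberg group. -/
noncomputable def koranyiDist {N : ℕ} (w w' : EuclideanSpace ℂ (Fin N) × ℝ) : ℝ :=
  (‖w.1 - w'.1‖ ^ 4 + (w.2 - w'.2 - 2 * (∑ i, w.1 i * conj (w'.1 i)).im) ^ 2) ^ ((1 : ℝ) / 4)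

/-- The distance `d(ζ,η) = (2|1 - ζ·conj(η)|)^{1/2}` on the sphere `S^{2N+1}`. -/
noncomputable def sphereDist {N : ℕ} (ζ η : EuclideanSpace ℂ (Fin N) × ℂ) : ℝ :=
  Real.sqrt (2 * ‖(1 - (∑ i, ζ.1 i * conj (η.1 i) + ζ.2 * conj η.2))‖)

lemma norm_sub_sq_complex' {N : ℕ} (z z' : EuclideanSpace ℂ (Fin N)) :
    ‖z - z'‖ ^ 2 = ‖z‖ ^ 2 + ‖z'‖ ^ 2 - 2 * (∑ i, z i * conj (z' i)).re := by
  have h := @norm_sub_sq ℂ _ _ _ _ z z'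
  have h2 : (inner ℂ z z' : ℂ) = ∑ i, conj (z i) * z' i := by
    simp [PiLp.inner_apply, RCLike.inner_apply, mul_comm]
  have h3 : (∑ i, z i * conj (z' i)).re = RCLike.re (inner ℂ z z' : ℂ) := by
    rw [h2, ← Complex.conj_re]
    simp only [map_sum, map_mul, Complex.conj_conj, RCLike.re_to_complex, mul_comm,
      Complex.re_sum]
  rw [h3, h]; ring

/-- Conformal relation between the Korányi distance and the sphere distance
under the Cayley transform. -/
theorem sphereDist_cayley {N : ℕ} (w w' : EuclideanSpace ℂ (Fin N) × ℝ) :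
    sphereDist (cayley w) (cayley w') =
      koranyiDist w w' *
        (4 / ((1 + ‖w.1‖ ^ 2) ^ 2 + w.2 ^ 2)) ^ ((1 : ℝ) / 4) *
        (4 / ((1 + ‖w'.1‖ ^ 2) ^ 2 + w'.2 ^ 2)) ^ ((1 : ℝ) / 4) := by
  obtain ⟨z, t⟩ := w
  obtain ⟨z', t'⟩ := w'
  simp only [sphereDist, koranyiDist, cayley, PiLp.toLp_apply]
  set S : ℂ := ∑ i, z i * conj (z' i) with hS
  set Q : ℂ := (((1 : ℝ) + ‖z‖ ^ 2 : ℝ) : ℂ) + (t : ℂ) * I with hQdef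
  set Q' : ℂ := (((1 : ℝ) + ‖z'‖ ^ 2 : ℝ) : ℂ) + (t' : ℂ) * I with hQ'def
  set P : ℂ := (((1 : ℝ) - ‖z‖ ^ 2 : ℝ) : ℂ) - (t : ℂ) * I with hPdef
  set P' : ℂ := (((1 : ℝ) - ‖z'‖ ^ 2 : ℝ) : ℂ) - (t' : ℂ) * I with hP'def
  set τ : ℝ := t - t' - 2 * S.im with hτ
  set A : ℝ := (1 + ‖z‖ ^ 2) ^ 2 + t ^ 2 with hA
  set B : ℝ := (1 + ‖z'‖ ^ 2) ^ 2 + t' ^ 2 with hB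
  set K : ℝ := ‖z - z'‖ ^ 4 + τ ^ 2 with hK
  have hApos : 0 < A := by positivity
  have hBpos : 0 < B := by positivity
  have hKnn : 0 ≤ K := by positivity
  have hQ0 : Q ≠ 0 := by
    intro h
    have := congrArg Complex.re h
    simp [hQdef, ← Complex.ofReal_pow] at this
    nlinarith [sq_nonneg ‖z‖]
  have hQ'0 : Q' ≠ 0 := by
    intro h
    have := congrArg Complex.re h
    simp [hQ'def, ← Complex.ofReal_pow] at this
    nlinarith [sq_nonneg ‖z'‖]
  have hD0 : Q * conj Q' ≠ 0 := by
    simp [hQ0, hQ'0]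
  -- the sum of products
  have hc1 : ∑ i, 2 * z i / Q * conj (2 * z' i / Q') = 4 * S / (Q * conj Q') := by
    have : ∀ i : Fin N, 2 * z i / Q * conj (2 * z' i / Q')
        = 4 * (z i * conj (z' i)) / (Q * conj Q') := by
      intro i
      rw [map_div₀, map_mul, map_ofNat, div_mul_div_comm]
      congr 1
      ring
    rw [Finset.sum_congr rfl fun i _ => this i, ← Finset.sum_div, ← Finset.mul_sum]
  have hc2 : P / Q * conj (P' / Q') = P * conj P' / (Q * conj Q') := by
    rw [map_div₀, div_mul_div_comm]
  -- the key algebraic identity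
  have hzz : ‖z - z'‖ ^ 2 = ‖z‖ ^ 2 + ‖z'‖ ^ 2 - 2 * S.re := norm_sub_sq_complex' z z'
  have hkey : Q * conj Q' - (4 * S + P * conj P')
      = 2 * (((‖z - z'‖ ^ 2 : ℝ) : ℂ) + (τ : ℂ) * I) := by
    rw [hQdef, hQ'def, hPdef, hP'def]
    apply Complex.ext
    · simp [Complex.mul_re, ← Complex.ofReal_pow, hzz, hτ]
      ring
    · simp [Complex.mul_im, ← Complex.ofReal_pow, hτ]
      ring
  have hinner : (1 : ℂ) - (∑ i, 2 * z i / Q * conj (2 * z' i / Q') + P / Q * conj (P' / Q'))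
      = 2 * (((‖z - z'‖ ^ 2 : ℝ) : ℂ) + (τ : ℂ) * I) / (Q * conj Q') := by
    rw [hc1, hc2, ← add_div, ← hkey]
    field_simp
    rw [sub_div, mul_div_cancel_right₀ _ ((map_ne_zero _).mpr hQ'0)]
  rw [hinner]
  -- compute absolute values
  have habsQ : ‖Q‖ = Real.sqrt A := by
    rw [Complex.norm_def]
    congr 1
    simp [hQdef, Complex.normSq_apply, ← Complex.ofReal_pow, hA]
    ring
  have habsQ' : ‖Q'‖ = Real.sqrt B := by
    rw [Complex.norm_def]
    congr 1
    simp [hQ'def, Complex.normSq_apply, ← Complex.ofReal_pow, hB]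
    ring
  have habsc : ‖(((‖z - z'‖ ^ 2 : ℝ) : ℂ) + (τ : ℂ) * I)‖ = Real.sqrt K := by
    rw [Complex.norm_def]
    congr 1
    simp [Complex.normSq_apply, ← Complex.ofReal_pow, hK]
    ring
  rw [norm_div, norm_mul, norm_mul, Complex.norm_conj, habsQ, habsQ', habsc,
    Complex.norm_two]
  -- now pure real computation
  have h1 : 2 * (2 * Real.sqrt K / (Real.sqrt A * Real.sqrt B))
      = Real.sqrt (16 * K / (A * B)) := by
    rw [Real.sqrt_div (by positivity) (A * B), Real.sqrt_mul (by norm_num : (0:ℝ) ≤ 16),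
      Real.sqrt_mul hApos.le,
      show Real.sqrt 16 = 4 by
        rw [show (16 : ℝ) = 4 ^ 2 by norm_num, Real.sqrt_sq (by norm_num : (0:ℝ) ≤ 4)]]
    ring
  have h2 : Real.sqrt (Real.sqrt (16 * K / (A * B))) = (16 * K / (A * B)) ^ ((1:ℝ)/4) := by
    rw [Real.sqrt_eq_rpow, Real.sqrt_eq_rpow, ← Real.rpow_mul (by positivity)]
    norm_num
  rw [h1, h2, ← Real.mul_rpow hKnn (by positivity), ← Real.mul_rpow (by positivity) (by positivity)]
  congr 1
  field_simp
  ring
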